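/- Let V be an n-dimensional real vector space equipped with data (γ, ℓ, ℓ⁽²⁾, P, n, n⁽²⁾) satisfying the four contraction identities, with n⁽²⁾ = 0. Let {n, e₂, …, e_n} be a basis of V whose first vector is n, and let {q, θ², …, θⁿ} be the dual basis (so q(n)=1, q(e_A)=0, θ^A(n)=0, θ^A(e_B)=δ^A_B). Set ψ_A := ℓ(e_A) and 𝔥_{AB} := γ(e_A, e_B) for A,B ∈ {2,…,n}. Then the matrix (𝔥_{AB}) is invertible, γ decomposes as γ = Σ_{A,B} 𝔥_{AB} θ^A ⊗ θ^B, and, denoting by (𝔥^{AB}) the inverse matrix, P decomposes as P = Σ_{A,B} 𝔥^{AB} e_A ⊗ e_B − Σ_{A,B} 𝔥^{AB} ψ_B (n ⊗ e_A + e_A ⊗ n) − (ℓ⁽²⁾ − Σ_{A,B} 𝔥^{AB} ψ_A ψ_B) n ⊗ n, where vectors of V are regarded as linear functionals on V* so that both sides are bilinear forms on V*. -/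

import Mathlib

open Module

/-
Since `n` spans the radical of `γ`, the form `γ` only sees the `θ^A`-components, so
`γ(e_A) = 𝔥_{AB} θ^B`, and `ℓ(n) = 1` gives `ℓ = q + ψ_A θ^A`. Contraction identity (4) at `e_A`
reads `𝔥_{AB} P(θ^B, ·) = (·)(e_A) - ψ_A (·)(n)`: evaluated on the `θ^C` it shows that `𝔥` is
invertible with inverse `P(θ^A, θ^B)`, and then it determines `P(θ^A, ·)`. Identity (3) determines
`P(q, ·) = P(ℓ, ·) - ψ_A P(θ^A, ·)`, and the symmetry of `𝔥⁻¹` brings the result into the stated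
symmetric form.
-/

/-- The vector of `V` corresponding to `P(ρ,·) ∈ V**`, via the canonical
identification `V ≅ V**`. -/
noncomputable def Pvec {V : Type*} [AddCommGroup V] [Module ℝ V] [FiniteDimensional ℝ V]
    (P : LinearMap.BilinForm ℝ (Module.Dual ℝ V)) (ρ : Module.Dual ℝ V) : V :=
  (Module.evalEquiv ℝ V).symm (P ρ)

namespace Module.Basis

variable {R M ι : Type*} [CommSemiring R] [AddCommMonoid M] [Module R M]
  (b : Basis (Option ι) R M)

theorem coord_none_add_sum_coord_some [Fintype ι] (x : M) :
    b.coord none x • b none + ∑ A, b.coord (some A) x • b (some A) = x := by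
  simpa only [coord_apply, Fintype.sum_option] using b.sum_repr x

theorem dual_apply_none_smul_coord_add_sum [Fintype ι] (φ : Dual R M) :
    φ (b none) • b.coord none + ∑ A, φ (b (some A)) • b.coord (some A) = φ := by
  simpa only [Fintype.sum_option] using b.sum_dual_apply_smul_coord φ

theorem coord_some_apply_none (A : ι) : b.coord (some A) (b none) = 0 := by
  simp [coord_apply]

theorem coord_some_apply_some [DecidableEq ι] (A B : ι) :
    b.coord (some A) (b (some B)) = if A = B then 1 else 0 := by
  simp [coord_apply, Finsupp.single_apply, eq_comm]

end Module.Basis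

theorem apply_Pvec {V : Type*} [AddCommGroup V] [Module ℝ V] [FiniteDimensional ℝ V]
    (P : LinearMap.BilinForm ℝ (Dual ℝ V)) (ρ φ : Dual ℝ V) : φ (Pvec P ρ) = P ρ φ :=
  apply_evalEquiv_symm_apply ℝ V φ (P ρ)

section NullData

variable {V ι : Type*} [AddCommGroup V] [Module ℝ V] [Fintype ι]
  {γ : LinearMap.BilinForm ℝ V} {ℓ : Dual ℝ V} {ℓ2 : ℝ} {n : V} {b : Basis (Option ι) ℝ V}

theorem gamma_apply_eq_sum (hγn : γ n = 0) (hb : b none = n) (X : V) :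
    γ X = ∑ A, b.coord (some A) X • γ (b (some A)) := by
  conv_lhs => rw [← b.coord_none_add_sum_coord_some X]
  simp only [map_add, map_sum, map_smul, hb, hγn, smul_zero, zero_add]

theorem gamma_basis_some_eq_sum (hγsym : ∀ X Y, γ X Y = γ Y X) (hγn : γ n = 0) (hb : b none = n)
    (A : ι) : γ (b (some A)) = ∑ B, γ (b (some A)) (b (some B)) • b.coord (some B) := by
  conv_lhs => rw [← b.dual_apply_none_smul_coord_add_sum (γ (b (some A)))]
  rw [hb, hγsym, hγn, LinearMap.zero_apply, zero_smul, zero_add]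

theorem gamma_apply_apply (hγsym : ∀ X Y, γ X Y = γ Y X) (hγn : γ n = 0) (hb : b none = n)
    (X Y : V) : γ X Y = ∑ A, ∑ B,
      γ (b (some A)) (b (some B)) * b.coord (some A) X * b.coord (some B) Y := by
  rw [gamma_apply_eq_sum hγn hb X, LinearMap.sum_apply]
  refine Finset.sum_congr rfl fun A _ => ?_
  conv_lhs => rw [LinearMap.smul_apply, gamma_basis_some_eq_sum hγsym hγn hb A]
  simp only [LinearMap.sum_apply, LinearMap.smul_apply, smul_eq_mul, Finset.mul_sum]
  exact Finset.sum_congr rfl fun B _ => by ring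

variable [FiniteDimensional ℝ V] {P : LinearMap.BilinForm ℝ (Dual ℝ V)}

theorem P_gamma_apply (h4 : ∀ X, Pvec P (γ X) + ℓ X • n = X) (X : V) (φ : Dual ℝ V) :
    P (γ X) φ = φ X - ℓ X * φ n := by
  have h := congrArg φ (h4 X)
  rw [map_add, map_smul, apply_Pvec, smul_eq_mul] at h
  linarith

theorem P_ell_apply (h3 : Pvec P ℓ + ℓ2 • n = 0) (φ : Dual ℝ V) : P ℓ φ = -(ℓ2 * φ n) := by
  have h := congrArg φ h3
  rw [map_add, map_smul, apply_Pvec, smul_eq_mul, map_zero] at h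
  linarith

theorem sum_gram_mul_P_coord_some (hγsym : ∀ X Y, γ X Y = γ Y X) (hγn : γ n = 0)
    (hb : b none = n) (h4 : ∀ X, Pvec P (γ X) + ℓ X • n = X) (A : ι) (φ : Dual ℝ V) :
    ∑ B, γ (b (some A)) (b (some B)) * P (b.coord (some B)) φ
      = φ (b (some A)) - ℓ (b (some A)) * φ n := by
  rw [← P_gamma_apply h4]
  conv_rhs => rw [gamma_basis_some_eq_sum hγsym hγn hb]
  simp only [map_sum, map_smul, LinearMap.sum_apply, LinearMap.smul_apply, smul_eq_mul]

theorem P_coord_none_apply (hb : b none = n) (hℓn : ℓ n = 1) (h3 : Pvec P ℓ + ℓ2 • n = 0)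
    (φ : Dual ℝ V) :
    P (b.coord none) φ = -(ℓ2 * φ n) - ∑ A, ℓ (b (some A)) * P (b.coord (some A)) φ := by
  have hℓ : P ℓ φ = P (b.coord none) φ + ∑ A, ℓ (b (some A)) * P (b.coord (some A)) φ := by
    conv_lhs => rw [← b.dual_apply_none_smul_coord_add_sum ℓ]
    simp only [hb, hℓn, one_smul, map_add, map_sum, map_smul, LinearMap.add_apply,
      LinearMap.sum_apply, LinearMap.smul_apply, smul_eq_mul]
  rw [P_ell_apply h3] at hℓ
  linarith

variable [DecidableEq ι] {H : Matrix ι ι ℝ}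

theorem gram_mul_P_coord_eq_one (hγsym : ∀ X Y, γ X Y = γ Y X) (hγn : γ n = 0)
    (hb : b none = n) (h4 : ∀ X, Pvec P (γ X) + ℓ X • n = X)
    (hH : ∀ A B, H A B = γ (b (some A)) (b (some B))) :
    H * Matrix.of (fun A B => P (b.coord (some A)) (b.coord (some B))) = 1 := by
  ext A C
  simp only [Matrix.mul_apply, Matrix.of_apply, hH, sum_gram_mul_P_coord_some hγsym hγn hb h4,
    b.coord_some_apply_some, ← hb, b.coord_some_apply_none, mul_zero, sub_zero, Matrix.one_apply,
    eq_comm]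

theorem P_coord_some_apply (hγsym : ∀ X Y, γ X Y = γ Y X) (hγn : γ n = 0)
    (hb : b none = n) (h4 : ∀ X, Pvec P (γ X) + ℓ X • n = X)
    (hH : ∀ A B, H A B = γ (b (some A)) (b (some B))) (A : ι) (φ : Dual ℝ V) :
    P (b.coord (some A)) φ = ∑ B, H⁻¹ A B * (φ (b (some B)) - ℓ (b (some B)) * φ n) := by
  have := (IsUnit.of_mul_eq_one _ (gram_mul_P_coord_eq_one hγsym hγn hb h4 hH)).invertible
  have hmul : (fun B => φ (b (some B)) - ℓ (b (some B)) * φ n)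
      = H.mulVec fun B => P (b.coord (some B)) φ := by
    ext B
    simp only [Matrix.mulVec, dotProduct, hH, sum_gram_mul_P_coord_some hγsym hγn hb h4]
  exact (congrFun (Matrix.inv_mulVec_eq_vec hmul) A).symm

theorem P_apply_apply (hγsym : ∀ X Y, γ X Y = γ Y X) (hγn : γ n = 0) (hb : b none = n)
    (hℓn : ℓ n = 1) (h3 : Pvec P ℓ + ℓ2 • n = 0) (h4 : ∀ X, Pvec P (γ X) + ℓ X • n = X)
    (hH : ∀ A B, H A B = γ (b (some A)) (b (some B)))
    {ψ : ι → ℝ} (hψ : ∀ A, ψ A = ℓ (b (some A))) (α β : Dual ℝ V) :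
    P α β = (∑ A, ∑ B, H⁻¹ A B * α (b (some A)) * β (b (some B)))
      - (∑ A, ∑ B, H⁻¹ A B * ψ B * (α n * β (b (some A)) + α (b (some A)) * β n))
      - (ℓ2 - ∑ A, ∑ B, H⁻¹ A B * ψ A * ψ B) * (α n * β n) := by
  have hα : P α β = α n * P (b.coord none) β + ∑ A, α (b (some A)) * P (b.coord (some A)) β := by
    conv_lhs => rw [← b.dual_apply_none_smul_coord_add_sum α]
    simp only [hb, map_add, map_sum, map_smul, LinearMap.add_apply, LinearMap.sum_apply,
      LinearMap.smul_apply, smul_eq_mul]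
  have hHinv : H⁻¹.IsSymm := (Matrix.IsSymm.ext fun A B => by rw [hH, hH, hγsym]).inv
  have hcross : ∑ A, ∑ B, H⁻¹ A B * ψ B * (α n * β (b (some A)))
      = ∑ A, ∑ B, H⁻¹ A B * ψ A * (α n * β (b (some B))) := by
    rw [Finset.sum_comm]
    exact Finset.sum_congr rfl fun A _ => Finset.sum_congr rfl fun B _ => by rw [hHinv.apply]
  rw [hα, P_coord_none_apply hb hℓn h3]
  simp only [P_coord_some_apply hγsym hγn hb h4 hH, ← hψ, mul_add, Finset.sum_add_distrib,
    hcross]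
  simp only [mul_sub, sub_mul, Finset.mul_sum, Finset.sum_mul, Finset.sum_sub_distrib]
  -- `ring` does not normalize under the binders, so the summands are put in AC-normal form first
  simp only [mul_assoc, mul_comm, mul_left_comm]
  ring

end NullData

theorem gamma_P_decomposition_general {V : Type*} [AddCommGroup V] [Module ℝ V]
    [FiniteDimensional ℝ V]
    {ι : Type*} [Fintype ι] [DecidableEq ι]
    (γ : LinearMap.BilinForm ℝ V) (hγsym : ∀ X Y : V, γ X Y = γ Y X)
    (ℓ : Module.Dual ℝ V) (ℓ2 : ℝ)
    (P : LinearMap.BilinForm ℝ (Module.Dual ℝ V))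
    (n : V) (n2 : ℝ) (hn2 : n2 = 0)
    (h1 : γ n + n2 • ℓ = 0)
    (h2 : ℓ n + n2 * ℓ2 = 1)
    (h3 : Pvec P ℓ + ℓ2 • n = 0)
    (h4 : ∀ X : V, Pvec P (γ X) + ℓ X • n = X)
    (b : Basis (Option ι) ℝ V) (hb : b none = n)
    (ψ : ι → ℝ) (hψ : ∀ A, ψ A = ℓ (b (some A)))
    (H : Matrix ι ι ℝ) (hH : ∀ A B, H A B = γ (b (some A)) (b (some B))) :
    IsUnit H ∧
    (∀ X Y : V, γ X Y =
      ∑ A : ι, ∑ B : ι, H A B * (b.coord (some A) X) * (b.coord (some B) Y)) ∧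
    (∀ α β : Module.Dual ℝ V, P α β =
      (∑ A : ι, ∑ B : ι, H⁻¹ A B * α (b (some A)) * β (b (some B)))
      - (∑ A : ι, ∑ B : ι, H⁻¹ A B * ψ B * (α n * β (b (some A)) + α (b (some A)) * β n))
      - (ℓ2 - ∑ A : ι, ∑ B : ι, H⁻¹ A B * ψ A * ψ B) * (α n * β n)) := by
  subst hn2
  rw [zero_smul, add_zero] at h1
  rw [zero_mul, add_zero] at h2
  refine ⟨IsUnit.of_mul_eq_one _ (gram_mul_P_coord_eq_one hγsym h1 hb h4 hH), fun X Y => ?_,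
    P_apply_apply hγsym h1 hb h2 h3 h4 hH hψ⟩
  simpa only [hH] using gamma_apply_apply hγsym h1 hb X Y

/-- Decomposition of `γ` and `P` for null hypersurface data in a basis `{n, e_A}` with dual
basis `{q, θ^A}`: the matrix `𝔥_{AB} = γ(e_A,e_B)` is invertible,
`γ = 𝔥_{AB} θ^A ⊗ θ^B` and
`P = 𝔥^{AB} e_A ⊗ e_B − 𝔥^{AB} ψ_B (n ⊗ e_A + e_A ⊗ n) − (ℓ⁽²⁾ − 𝔥^{AB} ψ_A ψ_B) n ⊗ n`. -/
theorem gamma_P_decomposition {V : Type*} [AddCommGroup V] [Module ℝ V]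
    [FiniteDimensional ℝ V]
    {ι : Type*} [Fintype ι] [DecidableEq ι]
    (γ : LinearMap.BilinForm ℝ V) (hγsym : ∀ X Y : V, γ X Y = γ Y X)
    (ℓ : Module.Dual ℝ V) (ℓ2 : ℝ)
    (P : LinearMap.BilinForm ℝ (Module.Dual ℝ V)) (hPsym : ∀ α β, P α β = P β α)
    (n : V) (n2 : ℝ) (hn2 : n2 = 0)
    (h1 : γ n + n2 • ℓ = 0)
    (h2 : ℓ n + n2 * ℓ2 = 1)
    (h3 : Pvec P ℓ + ℓ2 • n = 0)
    (h4 : ∀ X : V, Pvec P (γ X) + ℓ X • n = X)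
    (b : Basis (Option ι) ℝ V) (hb : b none = n)
    (ψ : ι → ℝ) (hψ : ∀ A, ψ A = ℓ (b (some A)))
    (H : Matrix ι ι ℝ) (hH : ∀ A B, H A B = γ (b (some A)) (b (some B))) :
    IsUnit H ∧
    (∀ X Y : V, γ X Y =
      ∑ A : ι, ∑ B : ι, H A B * (b.coord (some A) X) * (b.coord (some B) Y)) ∧
    (∀ α β : Module.Dual ℝ V, P α β =
      (∑ A : ι, ∑ B : ι, H⁻¹ A B * α (b (some A)) * β (b (some B)))
      - (∑ A : ι, ∑ B : ι, H⁻¹ A B * ψ B * (α n * β (b (some A)) + α (b (some A)) * β n))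
      - (ℓ2 - ∑ A : ι, ∑ B : ι, H⁻¹ A B * ψ A * ψ B) * (α n * β n)) :=
  gamma_P_decomposition_general γ hγsym ℓ ℓ2 P n n2 hn2 h1 h2 h3 h4 b hb ψ hψ H hH
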